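/- arXiv:2207.07298 — 2 statements merged into one kernel-verified Lean document; each statement's English description precedes it below -/
import Mathlib

section
/- Let p be a prime, let Z = (Fin n → ℚ_p) with the sup norm, let μ be an additive Haar measure on Z, and let χ : ℚ_p → ℂ be a continuous unitary additive character such that χ(x) = 1 if and only if ‖x‖ ≤ 1 (i.e. the kernel of χ is exactly ℤ_p). Let U ⊆ Z be a nonempty open compact subset and let f : U → ℚ_p be a function admitting an exact first-order expansion: there are maps f' : U → (Z →ₗ[ℚ_p] ℚ_p) and R : U × Z → (Z →ₗ[ℚ_p] (Z →ₗ[ℚ_p] ℚ_p)) such that f(z₀ + z) = f(z₀) + f'(z₀)(z) + R(z₀, z)(z)(z) whenever z₀ ∈ U and z₀ + z ∈ U. Set M = sup { ‖R(z₀, z)(y)(y)‖ : z₀ ∈ U, z₀ + z ∈ U, ‖y‖ = 1 } and assume M < ∞, and set δ = inf { ‖f'(z₀)‖ : z₀ ∈ U } where ‖·‖ is the operator norm of a linear functional; assume δ > 0. Let φ : U → ℂ be locally constant, and let m₀ ∈ ℤ be the minimum of all m ∈ ℤ for which there is a finite disjoint covering of U by translates z_k + B_{p^{-m}} of the closed ball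 of radius p^{-m} such that φ is constant on each z_k + B_{p^{-m}}. Then for every λ ∈ ℚ_p with ‖λ‖ > max( p·δ^{-2}·M , δ^{-1}·p^{m₀} ), one has ∫_U χ(λ · f(z)) · φ(z) dμ(z) = 0. -/
open MeasureTheory Metric

section Aux

variable {p : ℕ} [Fact p.Prime] {n : ℕ}

instance psp_aux : IsUltrametricDist (Fin n → ℚ_[p]) := by
  apply IsUltrametricDist.isUltrametricDist_of_forall_norm_add_le_max_norm
  intro x y
  apply pi_norm_le_iff_of_nonneg (by positivity) |>.mpr
  intro i
  exact (IsUltrametricDist.norm_add_le_max (x i) (y i)).trans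
    (max_le_max (norm_le_pi_norm x i) (norm_le_pi_norm y i))

lemma psp_exists_coord (hn : 0 < n) (z : Fin n → ℚ_[p]) : ∃ i, ‖z‖ = ‖z i‖ := by
  obtain ⟨i, -, hi⟩ := Finset.exists_mem_eq_sup (Finset.univ : Finset (Fin n))
    ⟨⟨0, hn⟩, Finset.mem_univ _⟩ (fun i => ‖z i‖₊)
  exact ⟨i, by rw [Pi.norm_def, hi]; rfl⟩

lemma psp_opnorm_attained (hn : 0 < n) (ℓ : (Fin n → ℚ_[p]) →L[ℚ_[p]] ℚ_[p]) :
    ∃ y : Fin n → ℚ_[p], ‖y‖ = 1 ∧ ‖ℓ y‖ = ‖ℓ‖ := by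
  obtain ⟨i, -, hi⟩ := Finset.exists_mem_eq_sup' (α := ℝ)
    (⟨⟨0, hn⟩, Finset.mem_univ _⟩ : (Finset.univ : Finset (Fin n)).Nonempty)
    (fun j => ‖ℓ (Pi.single j 1)‖)
  have hmax : ∀ j : Fin n, ‖ℓ (Pi.single j 1)‖ ≤ ‖ℓ (Pi.single i 1)‖ := by
    intro j
    rw [← hi]
    exact Finset.le_sup' (fun j => ‖ℓ (Pi.single j 1)‖) (Finset.mem_univ j)
  refine ⟨Pi.single i 1, by rw [Pi.norm_single, norm_one], le_antisymm ?_ ?_⟩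
  · calc ‖ℓ (Pi.single i 1)‖ ≤ ‖ℓ‖ * ‖(Pi.single i 1 : Fin n → ℚ_[p])‖ := ℓ.le_opNorm _
    _ = ‖ℓ‖ := by rw [Pi.norm_single, norm_one, mul_one]
  · apply ℓ.opNorm_le_bound (norm_nonneg _)
    intro z
    conv_lhs => rw [← Finset.univ_sum_single z]
    rw [map_sum]
    apply IsUltrametricDist.norm_sum_le_of_forall_le_of_nonneg
      (by positivity)
    intro j _
    have hsingle : Pi.single j (z j) = z j • (Pi.single j 1 : Fin n → ℚ_[p]) := by
      funext k
      rcases eq_or_ne k j with rfl | hkj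
      · simp
      · simp [Pi.single_apply, hkj]
    rw [hsingle, ℓ.map_smul, smul_eq_mul, norm_mul]
    calc ‖z j‖ * ‖ℓ (Pi.single j 1)‖ ≤ ‖z‖ * ‖ℓ (Pi.single i 1)‖ :=
          mul_le_mul (norm_le_pi_norm z j) (hmax j) (norm_nonneg _) (norm_nonneg _)
      _ = ‖ℓ (Pi.single i 1)‖ * ‖z‖ := mul_comm _ _

lemma psp_isGLB_ppow {P : ℝ} (hP : 1 < P) {S : Set ℝ} {δ : ℝ}
    (hall : ∀ s ∈ S, s = 0 ∨ ∃ k : ℤ, s = P ^ k) (h : IsGLB S δ) (hδ : 0 < δ) :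
    ∃ c : ℤ, δ = P ^ c := by
  have hP0 : 0 < P := lt_trans one_pos hP
  have hex : ∃ s ∈ S, s < P * δ := by
    by_contra hc
    push_neg at hc
    have : P * δ ≤ δ := h.2 fun s hs => hc s hs
    nlinarith
  obtain ⟨s, hsS, hs⟩ := hex
  have hsδ : δ ≤ s := h.1 hsS
  obtain ⟨k, hk⟩ := (hall s hsS).resolve_left (by linarith)
  have hlb : s ∈ lowerBounds S := by
    intro s' hs'
    have hs'δ : δ ≤ s' := h.1 hs'
    obtain ⟨k', hk'⟩ := (hall s' hs').resolve_left (by linarith)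
    have : P ^ k < P ^ (k' + 1) := by
      rw [zpow_add_one₀ (ne_of_gt hP0)]
      calc P ^ k = s := hk.symm
        _ < P * δ := hs
        _ ≤ P * s' := by nlinarith
        _ = P ^ k' * P := by rw [hk', mul_comm]
    have hkk : k ≤ k' := by
      have := (zpow_lt_zpow_iff_right₀ hP).mp this
      omega
    rw [hk, hk']
    exact (zpow_le_zpow_iff_right₀ hP).mpr hkk
  refine ⟨k, le_antisymm ?_ ?_⟩
  · exact hk ▸ hsδ
  · exact hk ▸ h.2 hlb


lemma psp_isLUB_ppow {P : ℝ} (hP : 1 < P) {S : Set ℝ} {M : ℝ}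
    (hall : ∀ s ∈ S, s = 0 ∨ ∃ k : ℤ, s = P ^ k) (h : IsLUB S M) (hM : 0 < M) :
    ∃ b : ℤ, M = P ^ b := by
  have hP0 : 0 < P := lt_trans one_pos hP
  have hex : ∃ s ∈ S, M / P < s := by
    by_contra hc
    push_neg at hc
    have h1 : M ≤ M / P := h.2 fun s hs => hc s hs
    have h2 : M / P < M := by
      rw [div_lt_iff₀ hP0]
      nlinarith
    linarith
  obtain ⟨s, hsS, hs⟩ := hex
  have hsM : s ≤ M := h.1 hsS
  have hspos : 0 < s := lt_of_le_of_lt (by positivity) hs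
  obtain ⟨b, hb⟩ := (hall s hsS).resolve_left (ne_of_gt hspos)
  have hub : s ∈ upperBounds S := by
    intro s' hs'
    rcases hall s' hs' with rfl | ⟨b', hb'⟩
    · exact le_of_lt hspos
    · have : P ^ b' < P ^ (b + 1) := by
        rw [zpow_add_one₀ (ne_of_gt hP0)]
        calc P ^ b' = s' := hb'.symm
          _ ≤ M := h.1 hs'
          _ < P * s := by rw [← div_lt_iff₀' hP0]; exact hs
          _ = P ^ b * P := by rw [hb, mul_comm]
      have hbb : b' ≤ b := by
        have := (zpow_lt_zpow_iff_right₀ hP).mp this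
        omega
      rw [hb, hb']
      exact (zpow_le_zpow_iff_right₀ hP).mpr hbb
  refine ⟨b, le_antisymm ?_ ?_⟩
  · exact hb ▸ h.2 hub
  · exact hb ▸ hsM

lemma psp_integral_char_ball_eq_zero
    [MeasurableSpace (Fin n → ℚ_[p])] [BorelSpace (Fin n → ℚ_[p])]
    (μ : Measure (Fin n → ℚ_[p])) [μ.IsAddHaarMeasure]
    (χ : AddChar ℚ_[p] ℂ) (hχker : ∀ x : ℚ_[p], χ x = 1 ↔ ‖x‖ ≤ 1)
    (g : (Fin n → ℚ_[p]) →L[ℚ_[p]] ℚ_[p]) (r : ℝ)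
    (t₀ : Fin n → ℚ_[p]) (ht₀ : ‖t₀‖ ≤ r) (hnt : 1 < ‖g t₀‖) :
    ∫ t in closedBall 0 r, χ (g t) ∂μ = 0 := by
  have hpre : (· + t₀) ⁻¹' (closedBall (0 : Fin n → ℚ_[p]) r) = closedBall 0 r := by
    ext t
    simp only [Set.mem_preimage, mem_closedBall, dist_zero_right]
    constructor
    · intro h
      have : t = (t + t₀) + (-t₀) := by ring
      rw [this]
      refine (IsUltrametricDist.norm_add_le_max _ _).trans (max_le h ?_)
      rwa [norm_neg]
    · intro h
      exact (IsUltrametricDist.norm_add_le_max t t₀).trans (max_le h ht₀)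
  have htrans := (measurePreserving_add_right μ t₀).setIntegral_preimage_emb
      (measurableEmbedding_addRight t₀) (fun t => χ (g t)) (closedBall 0 r)
  rw [hpre] at htrans
  have hmul : ∀ t : Fin n → ℚ_[p], χ (g (t + t₀)) = χ (g t₀) * χ (g t) := by
    intro t
    rw [map_add, AddChar.map_add_eq_mul, mul_comm]
  simp only [hmul] at htrans
  rw [integral_const_mul] at htrans
  have hne : χ (g t₀) ≠ 1 := fun h => absurd ((hχker _).mp h) (not_le.mpr hnt)
  by_contra hJ
  apply hne
  have h1 : χ (g t₀) * ∫ (t : Fin n → ℚ_[p]) in closedBall 0 r, χ (g t) ∂μ =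
      1 * ∫ (t : Fin n → ℚ_[p]) in closedBall 0 r, χ (g t) ∂μ := by
    rw [one_mul]; exact htrans
  exact mul_right_cancel₀ hJ h1

end Aux


/-- The p-adic method of stationary phase (Lemma 6 of the paper, after Heifetz):
if `f : U → ℚ_p` has an exact first-order expansion with second-order remainder
bounded by `M`, the derivative `f'` has norm bounded below by `δ > 0` on `U`, and
`φ` is locally constant on `U` with minimal covering exponent `m₀`, then the
oscillatory integral `∫_U χ(λ f(z)) φ(z) dμ(z)` vanishes for all `λ` with
`‖λ‖ > max(p δ⁻² M, δ⁻¹ p^{m₀})`. -/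
theorem padic_stationary_phase
    {p : ℕ} [Fact p.Prime] {n : ℕ}
    [MeasurableSpace (Fin n → ℚ_[p])] [BorelSpace (Fin n → ℚ_[p])]
    (μ : Measure (Fin n → ℚ_[p])) [μ.IsAddHaarMeasure]
    (χ : AddChar ℚ_[p] ℂ) (hχcont : Continuous χ)
    (hχunit : ∀ x : ℚ_[p], ‖χ x‖ = 1)
    (hχker : ∀ x : ℚ_[p], χ x = 1 ↔ ‖x‖ ≤ 1)
    (U : Set (Fin n → ℚ_[p])) (hUne : U.Nonempty)
    (hUopen : IsOpen U) (hUcomp : IsCompact U)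
    (f : (Fin n → ℚ_[p]) → ℚ_[p])
    (f' : (Fin n → ℚ_[p]) → ((Fin n → ℚ_[p]) →L[ℚ_[p]] ℚ_[p]))
    (R : (Fin n → ℚ_[p]) × (Fin n → ℚ_[p]) →
        ((Fin n → ℚ_[p]) →ₗ[ℚ_[p]] ((Fin n → ℚ_[p]) →ₗ[ℚ_[p]] ℚ_[p])))
    (hTaylor : ∀ z₀ z : Fin n → ℚ_[p], z₀ ∈ U → z₀ + z ∈ U →
      f (z₀ + z) = f z₀ + f' z₀ z + R (z₀, z) z z)
    (M : ℝ)
    (hM : IsLUB {r : ℝ | ∃ z₀ z y : Fin n → ℚ_[p],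
      z₀ ∈ U ∧ z₀ + z ∈ U ∧ ‖y‖ = 1 ∧ r = ‖R (z₀, z) y y‖} M)
    (δ : ℝ)
    (hδ : IsGLB {r : ℝ | ∃ z₀ ∈ U, r = ‖f' z₀‖} δ)
    (hδpos : 0 < δ)
    (φ : (Fin n → ℚ_[p]) → ℂ)
    (hφ : ∀ z ∈ U, ∃ ε > 0, ∀ z' ∈ U, dist z' z < ε → φ z' = φ z)
    (m₀ : ℤ)
    (hm₀ : IsLeast {m : ℤ | ∃ s : Finset (Fin n → ℚ_[p]),
      U = ⋃ zk ∈ s, closedBall zk ((p : ℝ) ^ (-m)) ∧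
      (s : Set (Fin n → ℚ_[p])).Pairwise (fun a b =>
        Disjoint (closedBall a ((p : ℝ) ^ (-m))) (closedBall b ((p : ℝ) ^ (-m)))) ∧
      ∀ zk ∈ s, ∀ x ∈ closedBall zk ((p : ℝ) ^ (-m)),
        ∀ y ∈ closedBall zk ((p : ℝ) ^ (-m)), φ x = φ y} m₀)
    (lam : ℚ_[p])
    (hlam : max ((p : ℝ) * δ⁻¹ ^ 2 * M) (δ⁻¹ * (p : ℝ) ^ m₀) < ‖lam‖) :
    ∫ z in U, χ (lam * f z) * φ z ∂μ = 0 := by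
  classical
  have hp1 : (1 : ℝ) < p := by exact_mod_cast (Fact.out : p.Prime).one_lt
  have hp0 : (0 : ℝ) < p := lt_trans one_pos hp1
  have hpne : (p : ℝ) ≠ 0 := ne_of_gt hp0
  obtain ⟨zU, hzU⟩ := hUne
  -- n is positive
  have hn : 0 < n := by
    rcases Nat.eq_zero_or_pos n with h0 | h
    · exfalso
      subst h0
      have hle : ‖f' zU‖ ≤ 0 := (f' zU).opNorm_le_bound le_rfl (fun x => by
        have hx : x = 0 := funext fun i => i.elim0
        rw [hx, map_zero, norm_zero, norm_zero, mul_zero])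
      have := hδ.1 ⟨zU, hzU, rfl⟩
      have : δ ≤ ‖f' zU‖ := this
      linarith
    · exact h
  -- δ facts
  have hδle : ∀ z ∈ U, δ ≤ ‖f' z‖ := fun z hz => hδ.1 ⟨z, hz, rfl⟩
  have hδS : ∀ s ∈ {r : ℝ | ∃ z₀ ∈ U, r = ‖f' z₀‖}, s = 0 ∨ ∃ k : ℤ, s = (p : ℝ) ^ k := by
    rintro s ⟨z, hz, rfl⟩
    obtain ⟨y, hy1, hy2⟩ := psp_opnorm_attained hn (f' z)
    rcases eq_or_ne (f' z y) 0 with h | h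
    · left; rw [← hy2, h, norm_zero]
    · right
      exact ⟨-(f' z y).valuation, by rw [← hy2]; exact Padic.norm_eq_zpow_neg_valuation h⟩
  obtain ⟨c, hc⟩ := psp_isGLB_ppow hp1 hδS hδ hδpos
  -- lam facts
  have hlam2 : δ⁻¹ * (p : ℝ) ^ m₀ < ‖lam‖ := lt_of_le_of_lt (le_max_right _ _) hlam
  have hlam1 : (p : ℝ) * δ⁻¹ ^ 2 * M < ‖lam‖ := lt_of_le_of_lt (le_max_left _ _) hlam
  have hlampos : (0 : ℝ) < ‖lam‖ :=
    lt_trans (mul_pos (inv_pos.mpr hδpos) (zpow_pos hp0 m₀)) hlam2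
  have hlam0 : lam ≠ 0 := by
    intro h; rw [h, norm_zero] at hlampos; exact lt_irrefl _ hlampos
  set a : ℤ := -lam.valuation with ha
  have hnorm_lam : ‖lam‖ = (p : ℝ) ^ a := by rw [ha]; exact Padic.norm_eq_zpow_neg_valuation hlam0
  set m : ℤ := a + c - 1 with hm
  set r : ℝ := (p : ℝ) ^ (-m) with hr
  have hrpos : 0 < r := zpow_pos hp0 _
  -- m₀ ≤ m
  have hm₀m : m₀ ≤ m := by
    have h1 : (p : ℝ) ^ (m₀ - c) < (p : ℝ) ^ a := by
      rw [zpow_sub₀ hpne]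
      calc (p : ℝ) ^ m₀ / (p : ℝ) ^ c = δ⁻¹ * (p : ℝ) ^ m₀ := by rw [hc]; ring
        _ < ‖lam‖ := hlam2
        _ = (p : ℝ) ^ a := hnorm_lam
    have := (zpow_lt_zpow_iff_right₀ hp1).mp h1
    omega
  have hrr₀ : r ≤ (p : ℝ) ^ (-m₀) := by
    rw [hr]
    exact (zpow_le_zpow_iff_right₀ hp1).mpr (by omega)
  -- K2
  have hK2 : ∀ z ∈ U, 1 < ‖lam‖ * ((p : ℝ) ^ (-m) * ‖f' z‖) := by
    intro z hz
    calc (1 : ℝ) < (p : ℝ) := hp1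
      _ = (p : ℝ) ^ ((1 : ℤ) - c) * (p : ℝ) ^ c := by
          rw [← zpow_add₀ hpne]; norm_num
      _ ≤ (p : ℝ) ^ ((1 : ℤ) - c) * ‖f' z‖ := by
          apply mul_le_mul_of_nonneg_left _ (le_of_lt (zpow_pos hp0 _))
          rw [← hc]; exact hδle z hz
      _ = ‖lam‖ * ((p : ℝ) ^ (-m) * ‖f' z‖) := by
          rw [hnorm_lam, ← mul_assoc, ← zpow_add₀ hpne]
          congr 2
          omega
  -- M facts
  have hM0 : 0 ≤ M := by
    refine le_trans (norm_nonneg _) (hM.1 ⟨zU, 0, Pi.single ⟨0, hn⟩ 1, hzU, by simpa using hzU,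
      by rw [Pi.norm_single, norm_one], rfl⟩)
  -- K3
  have hK3 : ‖lam‖ * (M * r ^ 2) ≤ 1 := by
    rcases eq_or_lt_of_le hM0 with hM0' | hMpos
    · rw [← hM0']
      simp
    · have hMS : ∀ s ∈ {r : ℝ | ∃ z₀ z y : Fin n → ℚ_[p],
          z₀ ∈ U ∧ z₀ + z ∈ U ∧ ‖y‖ = 1 ∧ r = ‖R (z₀, z) y y‖},
          s = 0 ∨ ∃ k : ℤ, s = (p : ℝ) ^ k := by
        rintro s ⟨z₀, z, y, -, -, -, rfl⟩
        rcases eq_or_ne (R (z₀, z) y y) 0 with h | h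
        · left; rw [h, norm_zero]
        · right; exact ⟨-(R (z₀, z) y y).valuation, Padic.norm_eq_zpow_neg_valuation h⟩
      obtain ⟨b, hb⟩ := psp_isLUB_ppow hp1 hMS hM hMpos
      have heq : (p : ℝ) * δ⁻¹ ^ 2 * M = (p : ℝ) ^ ((1 : ℤ) + -c + -c + b) := by
        rw [hc, hb, ← zpow_neg, sq]
        rw [zpow_add₀ hpne, zpow_add₀ hpne, zpow_add₀ hpne, zpow_one]
        ring
      have h1 : (p : ℝ) ^ ((1 : ℤ) + -c + -c + b) < (p : ℝ) ^ a := by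
        calc (p : ℝ) ^ ((1 : ℤ) + -c + -c + b) = (p : ℝ) * δ⁻¹ ^ 2 * M := heq.symm
          _ < ‖lam‖ := hlam1
          _ = (p : ℝ) ^ a := hnorm_lam
      have hab : (1 : ℤ) + -c + -c + b < a := (zpow_lt_zpow_iff_right₀ hp1).mp h1
      have h2 : ‖lam‖ * (M * r ^ 2) = (p : ℝ) ^ (a + (b + (-m + -m))) := by
        rw [hnorm_lam, hb, hr, sq, ← zpow_add₀ hpne, ← zpow_add₀ hpne, ← zpow_add₀ hpne]
      rw [h2]
      calc (p : ℝ) ^ (a + (b + (-m + -m))) ≤ (p : ℝ) ^ (0 : ℤ) := by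
            apply (zpow_le_zpow_iff_right₀ hp1).mpr
            omega
        _ = 1 := zpow_zero _
  -- covering by m₀-balls
  obtain ⟨s₀, hU₀, -, hconst⟩ := hm₀.1
  have hUball : ∀ z ∈ U, ∃ zk ∈ s₀, z ∈ closedBall zk ((p : ℝ) ^ (-m₀)) := by
    intro z hz
    rw [hU₀] at hz
    simpa using hz
  have hball : ∀ z ∈ U, closedBall z r ⊆ U ∧ ∀ w ∈ closedBall z r, φ w = φ z := by
    intro z hz
    obtain ⟨zk, hzk, hzmem⟩ := hUball z hz
    have hub : closedBall z r ⊆ closedBall zk ((p : ℝ) ^ (-m₀)) := by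
      intro w hw
      rw [IsUltrametricDist.closedBall_eq_of_mem hzmem]
      exact closedBall_subset_closedBall hrr₀ hw
    constructor
    · intro w hw
      rw [hU₀]
      exact Set.mem_biUnion hzk (hub hw)
    · intro w hw
      exact hconst zk hzk w (hub hw) z hzmem
  -- remainder bound
  have hRbound : ∀ z t : Fin n → ℚ_[p], z ∈ U → z + t ∈ U →
      ‖R (z, t) t t‖ ≤ M * ‖t‖ ^ 2 := by
    intro z t hz hzt
    rcases eq_or_ne t 0 with rfl | ht
    · simp only [map_zero, LinearMap.zero_apply, norm_zero]
      exact mul_nonneg hM0 (by positivity)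
    · obtain ⟨i, hi⟩ := psp_exists_coord hn t
      have htn : ‖t‖ ≠ 0 := norm_ne_zero_iff.mpr ht
      have hti : t i ≠ 0 := by
        intro h0; rw [h0, norm_zero] at hi; exact htn hi
      have hy : ‖(t i)⁻¹ • t‖ = 1 := by
        rw [norm_smul, norm_inv, ← hi, inv_mul_cancel₀ htn]
      have hty : t = t i • ((t i)⁻¹ • t) := (smul_inv_smul₀ hti t).symm
      have happ : ∀ (B : (Fin n → ℚ_[p]) →ₗ[ℚ_[p]] ((Fin n → ℚ_[p]) →ₗ[ℚ_[p]] ℚ_[p]))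
          (cc : ℚ_[p]) (y : Fin n → ℚ_[p]), B (cc • y) (cc • y) = cc * (cc * B y y) := by
        intro B cc y
        simp only [LinearMap.map_smul, LinearMap.smul_apply, smul_eq_mul]
      have key : R (z, t) t t = t i * (t i * R (z, t) ((t i)⁻¹ • t) ((t i)⁻¹ • t)) := by
        nth_rewrite 2 3 [hty]
        exact happ (R (z, t)) (t i) ((t i)⁻¹ • t)
      calc ‖R (z, t) t t‖
          = ‖t i‖ * (‖t i‖ * ‖R (z, t) ((t i)⁻¹ • t) ((t i)⁻¹ • t)‖) := by
            rw [key, norm_mul, norm_mul]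
        _ ≤ ‖t‖ * (‖t‖ * M) := by
            have hRB : ‖R (z, t) ((t i)⁻¹ • t) ((t i)⁻¹ • t)‖ ≤ M :=
              hM.1 ⟨z, t, (t i)⁻¹ • t, hz, hzt, hy, rfl⟩
            rw [← hi]
            apply mul_le_mul_of_nonneg_left _ (norm_nonneg _)
            exact mul_le_mul_of_nonneg_left hRB (norm_nonneg _)
        _ = M * ‖t‖ ^ 2 := by ring
  -- local decomposition of the integrand
  have hdecomp : ∀ z ∈ U, ∀ w ∈ closedBall z r,
      χ (lam * f w) * φ w = (χ (lam * f z) * φ z) * χ ((lam • f' z) (w - z)) := by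
    intro z hz w hw
    obtain ⟨hsubU, hconstz⟩ := hball z hz
    have ht : ‖w - z‖ ≤ r := by rwa [mem_closedBall, dist_eq_norm] at hw
    have hwz : z + (w - z) = w := by ring
    have hzw : z + (w - z) ∈ U := by rw [hwz]; exact hsubU hw
    have hTay := hTaylor z (w - z) hz hzw
    rw [hwz] at hTay
    have hRsmall : χ (lam * R (z, w - z) (w - z) (w - z)) = 1 := by
      apply (hχker _).mpr
      rw [norm_mul]
      calc ‖lam‖ * ‖R (z, w - z) (w - z) (w - z)‖
          ≤ ‖lam‖ * (M * ‖w - z‖ ^ 2) :=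
            mul_le_mul_of_nonneg_left (hRbound z (w - z) hz hzw) (norm_nonneg _)
        _ ≤ ‖lam‖ * (M * r ^ 2) := by
            apply mul_le_mul_of_nonneg_left _ (norm_nonneg _)
            apply mul_le_mul_of_nonneg_left _ hM0
            exact pow_le_pow_left₀ (norm_nonneg _) ht 2
        _ ≤ 1 := hK3
    have hφw : φ w = φ z := hconstz w hw
    rw [hTay, mul_add, mul_add, AddChar.map_add_eq_mul, AddChar.map_add_eq_mul, hRsmall,
      mul_one, hφw]
    have : (lam • f' z) (w - z) = lam * f' z (w - z) := by
      rw [ContinuousLinearMap.smul_apply, smul_eq_mul]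
    rw [this]
    ring
  -- each small ball integrates to zero
  have hballint : ∀ z ∈ U, ∫ w in closedBall z r, χ (lam * f w) * φ w ∂μ = 0 := by
    intro z hz
    have hpre : (z + ·) ⁻¹' (closedBall z r) = closedBall (0 : Fin n → ℚ_[p]) r := by
      ext t
      simp [mem_closedBall, dist_eq_norm, add_sub_cancel_left]
    have htrans := (measurePreserving_add_left μ z).setIntegral_preimage_emb
        (measurableEmbedding_addLeft z) (fun w => χ (lam * f w) * φ w) (closedBall z r)
    rw [hpre] at htrans
    rw [← htrans]
    have heq : Set.EqOn (fun t => χ (lam * f (z + t)) * φ (z + t))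
        (fun t => (χ (lam * f z) * φ z) * χ ((lam • f' z) t)) (closedBall 0 r) := by
      intro t htm
      have hmem : z + t ∈ closedBall z r := by
        rw [mem_closedBall, dist_eq_norm, add_sub_cancel_left]
        simpa [mem_closedBall, dist_eq_norm] using htm
      have := hdecomp z hz (z + t) hmem
      simpa [add_sub_cancel_left] using this
    rw [setIntegral_congr_fun measurableSet_closedBall heq, integral_const_mul]
    obtain ⟨y, hy1, hy2⟩ := psp_opnorm_attained hn (f' z)
    have hmemt : ‖(p : ℚ_[p]) ^ m • y‖ ≤ r := by
      rw [norm_smul, Padic.norm_p_zpow, hy1, mul_one, hr]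
    have hkey : 1 < ‖(lam • f' z) ((p : ℚ_[p]) ^ m • y)‖ := by
      rw [ContinuousLinearMap.smul_apply, smul_eq_mul, (f' z).map_smul, smul_eq_mul,
        norm_mul, norm_mul, Padic.norm_p_zpow, hy2]
      exact hK2 z hz
    rw [psp_integral_char_ball_eq_zero μ χ hχker (lam • f' z) r _ hmemt hkey, mul_zero]
  -- finite disjoint subcover and conclusion
  obtain ⟨s, hs⟩ := hUcomp.elim_finite_subcover
      (fun z : U => closedBall (z : Fin n → ℚ_[p]) r)
      (fun z => IsUltrametricDist.isOpen_closedBall _ (ne_of_gt hrpos))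
      (fun z hz => Set.mem_iUnion.mpr ⟨⟨z, hz⟩, mem_closedBall_self (le_of_lt hrpos)⟩)
  set T : Finset (Set (Fin n → ℚ_[p])) :=
    s.image (fun z : U => closedBall (z : Fin n → ℚ_[p]) r) with hT
  have hTU : U = ⋃ b ∈ T, b := by
    apply Set.Subset.antisymm
    · intro z hz
      have := hs hz
      rw [Set.mem_iUnion₂] at this
      obtain ⟨i, hi, hmem⟩ := this
      exact Set.mem_biUnion (Finset.mem_image_of_mem _ hi) hmem
    · intro z hz
      rw [Set.mem_iUnion₂] at hz
      obtain ⟨b, hb, hzb⟩ := hz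
      obtain ⟨w, hw, rfl⟩ := Finset.mem_image.mp hb
      exact (hball w w.2).1 hzb
  have hmeas : ∀ b ∈ T, MeasurableSet b := by
    intro b hb
    obtain ⟨w, hw, rfl⟩ := Finset.mem_image.mp hb
    exact measurableSet_closedBall
  have hdisj : (↑T : Set (Set (Fin n → ℚ_[p]))).Pairwise
      (Function.onFun Disjoint (fun b : Set (Fin n → ℚ_[p]) => b)) := by
    intro b₁ hb₁ b₂ hb₂ hne
    obtain ⟨w₁, hw₁, rfl⟩ := Finset.mem_image.mp (Finset.mem_coe.mp hb₁)
    obtain ⟨w₂, hw₂, rfl⟩ := Finset.mem_image.mp (Finset.mem_coe.mp hb₂)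
    rcases IsUltrametricDist.closedBall_eq_or_disjoint
        (w₁ : Fin n → ℚ_[p]) (w₂ : Fin n → ℚ_[p]) r with h | h
    · exact absurd h hne
    · exact h
  have hint : ∀ b ∈ T, IntegrableOn (fun z => χ (lam * f z) * φ z) b μ := by
    intro b hb
    obtain ⟨w, hw, rfl⟩ := Finset.mem_image.mp hb
    have hg : Continuous (fun x : Fin n → ℚ_[p] =>
        (χ (lam * f ↑w) * φ ↑w) * χ ((lam • f' (w : Fin n → ℚ_[p])) (x - ↑w))) := by
      apply Continuous.mul continuous_const
      exact hχcont.comp ((lam • f' (w : Fin n → ℚ_[p])).continuous.comp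
        (continuous_id.sub continuous_const))
    have hgi : IntegrableOn (fun x : Fin n → ℚ_[p] =>
        (χ (lam * f ↑w) * φ ↑w) * χ ((lam • f' (w : Fin n → ℚ_[p])) (x - ↑w)))
        (closedBall (w : Fin n → ℚ_[p]) r) μ :=
      hg.continuousOn.integrableOn_compact (isCompact_closedBall _ _)
    exact hgi.congr_fun (fun x hx => (hdecomp w w.2 x hx).symm) measurableSet_closedBall
  rw [hTU, integral_biUnion_finset T hmeas hdisj hint]
  apply Finset.sum_eq_zero
  intro b hb
  obtain ⟨w, hw, rfl⟩ := Finset.mem_image.mp hb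
  exact hballint w w.2
end

section
/- Let k be a field and n a natural number. Let J be the symmetric 2n × 2n matrix over k given in block form by J = [[0, I_n], [I_n, 0]] (the matrix of the split quadratic form x₁x_{n+1} + x₂x_{n+2} + ⋯ + x_n x_{2n}). Then every diagonal 2n × 2n matrix D over k satisfying Dᵀ J D = J has determinant det D = 1. -/
open Matrix

/-- Key computation in Proposition A.4: any diagonal matrix `D` in the split
even orthogonal group `O(2n, k)` (defined by `Dᵀ J D = J` where
`J = [[0, Iₙ], [Iₙ, 0]]` is the matrix of the split quadratic form
`x₁x_{n+1} + ⋯ + x_n x_{2n}`) has determinant `1`. -/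
theorem diag_mem_split_orthogonal_det_eq_one {k : Type*} [Field k] {n : ℕ}
    (J : Matrix (Fin n ⊕ Fin n) (Fin n ⊕ Fin n) k)
    (hJ : J = Matrix.fromBlocks 0 1 1 0)
    (D : Matrix (Fin n ⊕ Fin n) (Fin n ⊕ Fin n) k)
    (hD : D.IsDiag)
    (hDJ : Dᵀ * J * D = J) :
    D.det = 1 := by
  subst hJ
  obtain ⟨d, rfl⟩ : ∃ d, D = Matrix.diagonal d := ⟨D.diag, (hD.diagonal_diag).symm⟩
  have key : ∀ i : Fin n, d (Sum.inl i) * d (Sum.inr i) = 1 := by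
    intro i
    have h := congrFun (congrFun hDJ (Sum.inl i)) (Sum.inr i)
    simpa [Matrix.mul_apply, Matrix.diagonal_apply, Matrix.fromBlocks,
      Matrix.one_apply, Finset.sum_ite_eq', mul_comm] using h
  rw [Matrix.det_diagonal, Fintype.prod_sum_type]
  rw [← Finset.prod_mul_distrib]
  simp [key]
end
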